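/- arXiv:1112.4635 — 2 statements merged into one kernel-verified Lean document; each statement's English description precedes it below -/
import Mathlib

section
/- Let c₀ > 0, 4k > c₀², ω := √(4k - c₀²)/2, and σ_z²(t) := (1/ω²)·∫₀ᵗ e^{-c₀s}·sin²(ωs) ds. Then as t → 0, σ_z²(t) = t³/3 - c₀·t⁴/4 + o(t⁴). -/
/-!
Near `0`, `e^{-c₀ s} = 1 - c₀ s + O(s²)` and `sin²(ω s) / ω² = s² + O(s⁴)`, so the integrand is
`s² - c₀ s³ + O(s⁴)`. Integrating from `0` to `t`, the remainder is bounded by `C |t|⁴` on the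
whole interval, which leaves `t³/3 - c₀ t⁴/4 + O(t⁵)`.
-/

open Real Filter Asymptotics Topology intervalIntegral Set
open scoped Interval

theorem Real.sin_sub_self_isBigO_pow_three : (fun x => sin x - x) =O[𝓝 0] (· ^ 3) := by
  refine .of_bound 1 ?_
  filter_upwards [Metric.closedBall_mem_nhds (0 : ℝ) one_pos] with x hx
  have hx1 : |x| ≤ 1 := by simpa using hx
  have h53 : |x| ^ 5 ≤ |x| ^ 3 := pow_le_pow_of_le_one (abs_nonneg x) hx1 (by norm_num)
  calc |sin x - x| = |(sin x - (x - x ^ 3 / 6)) - x ^ 3 / 6| := by ring_nf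
    _ ≤ |sin x - (x - x ^ 3 / 6)| + |x ^ 3 / 6| := abs_sub _ _
    _ ≤ |x| ^ 5 / 100 + |x| ^ 3 / 6 := by
        gcongr
        · exact sin_bound hx1
        · rw [abs_div, abs_pow]; norm_num
    _ ≤ 1 * ‖x ^ 3‖ := by rw [norm_pow, norm_eq_abs]; linarith [pow_nonneg (abs_nonneg x) 3]

theorem Real.sin_sq_sub_sq_isBigO_pow_four : (fun x => sin x ^ 2 - x ^ 2) =O[𝓝 0] (· ^ 4) := by
  have hsum : (fun x => sin x + x) =O[𝓝 0] (· ^ 1) :=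
    .of_bound 2 <| .of_forall fun x => by
      simpa [two_mul] using (abs_add_le (sin x) x).trans (add_le_add_left abs_sin_le_abs _)
  simpa only [sq_sub_sq, ← pow_add, Nat.reduceAdd] using hsum.mul sin_sub_self_isBigO_pow_three

theorem Real.exp_sub_one_sub_self_isBigO_sq : (fun x => exp x - (1 + x)) =O[𝓝 0] (· ^ 2) := by
  simpa [Finset.sum_range_succ] using exp_sub_sum_range_isBigO_pow 2

theorem Asymptotics.IsBigO.comp_const_mul_pow {f : ℝ → ℝ} {n : ℕ} (hf : f =O[𝓝 0] (· ^ n))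
    (a : ℝ) : (fun s => f (a * s)) =O[𝓝 0] (· ^ n) := by
  have ha : Tendsto (a * ·) (𝓝 0) (𝓝 0) := by
    simpa using (continuous_const_mul a).tendsto 0
  have hpow : (fun s => (a * s) ^ n) =O[𝓝 0] (· ^ n) := by
    simpa only [mul_pow] using isBigO_const_mul_self (a ^ n) (· ^ n) _
  exact (hf.comp_tendsto ha).trans hpow

theorem Asymptotics.IsBigO.intervalIntegral_pow_succ {E : Type*} [NormedAddCommGroup E]
    [NormedSpace ℝ E] {f : ℝ → E} {n : ℕ} (hf : f =O[𝓝 0] (· ^ n)) :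
    (fun t => ∫ s in (0 : ℝ)..t, f s) =O[𝓝 0] (· ^ (n + 1)) := by
  obtain ⟨C, hC, hfC⟩ := hf.exists_nonneg
  obtain ⟨δ, hδ, hball⟩ := Metric.eventually_nhds_iff_ball.1 hfC.bound
  refine .of_bound C ?_
  filter_upwards [Metric.ball_mem_nhds (0 : ℝ) hδ] with t ht
  have hbound : ∀ s ∈ Ι 0 t, ‖f s‖ ≤ C * |t| ^ n := fun s hs => by
    have hst : |s| ≤ |t| := by simpa using abs_sub_left_of_mem_uIcc (uIoc_subset_uIcc hs)
    calc ‖f s‖ ≤ C * ‖s ^ n‖ := hball s (by simpa using hst.trans_lt (by simpa using ht))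
      _ ≤ C * |t| ^ n := by rw [norm_pow, norm_eq_abs]; gcongr
  simpa [pow_succ, mul_assoc] using norm_integral_le_of_norm_le_const hbound

theorem exp_neg_mul_mul_sin_sq_div_sq_sub_isBigO_pow_four (c : ℝ) {ω : ℝ} (hω : ω ≠ 0) :
    (fun s => exp (-c * s) * sin (ω * s) ^ 2 / ω ^ 2 - (s ^ 2 - c * s ^ 3)) =O[𝓝 0] (· ^ 4) := by
  have hsin : (fun s => sin (ω * s) ^ 2 / ω ^ 2 - s ^ 2) =O[𝓝 0] (· ^ 4) :=
    ((sin_sq_sub_sq_isBigO_pow_four.comp_const_mul_pow ω).const_mul_left (ω ^ 2)⁻¹).congr_left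
      fun s => by field_simp
  have hexp : (fun s => exp (-c * s) - (1 - c * s)) =O[𝓝 0] (· ^ 2) :=
    (exp_sub_one_sub_self_isBigO_sq.comp_const_mul_pow (-c)).congr_left fun s => by ring_nf
  have hexp_bdd : (fun s => exp (-c * s)) =O[𝓝 0] (fun _ => (1 : ℝ)) :=
    (Continuous.tendsto (by fun_prop) 0).isBigO_one ℝ
  have h₁ : (fun s => exp (-c * s) * (sin (ω * s) ^ 2 / ω ^ 2 - s ^ 2)) =O[𝓝 0] (· ^ 4) := by
    simpa only [one_mul] using hexp_bdd.mul hsin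
  have h₂ : (fun s => (exp (-c * s) - (1 - c * s)) * s ^ 2) =O[𝓝 0] (· ^ 4) :=
    (hexp.mul (isBigO_refl (· ^ 2) _)).congr_right fun s => by ring
  -- `e q - (s² - c s³) = e (q - s²) + (e - (1 - c s)) s²`
  exact (h₁.add h₂).congr_left fun s => by ring

theorem sigma_z_sq_expansion_general (c₀ k : ℝ) (h4k : c₀ ^ 2 < 4 * k)
    (ω : ℝ) (hω : ω = Real.sqrt (4 * k - c₀ ^ 2) / 2)
    (σz2 : ℝ → ℝ)
    (hσ : ∀ t, σz2 t = 1 / ω ^ 2 * ∫ s in (0 : ℝ)..t, Real.exp (-c₀ * s) * Real.sin (ω * s) ^ 2) :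
    (fun t => σz2 t - (t ^ 3 / 3 - c₀ * t ^ 4 / 4)) =o[nhds 0] fun t => t ^ 4 := by
  have hω₀ : ω ≠ 0 := by
    rw [hω]
    exact (div_pos (sqrt_pos.2 (by linarith)) two_pos).ne'
  have hσ_sub : ∀ t, σz2 t - (t ^ 3 / 3 - c₀ * t ^ 4 / 4) =
      ∫ s in (0 : ℝ)..t, (exp (-c₀ * s) * sin (ω * s) ^ 2 / ω ^ 2 - (s ^ 2 - c₀ * s ^ 3)) := by
    intro t
    rw [integral_sub (Continuous.intervalIntegrable (by fun_prop) _ _)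
        (Continuous.intervalIntegrable (by fun_prop) _ _),
      integral_div, integral_sub (Continuous.intervalIntegrable (by fun_prop) _ _)
        (Continuous.intervalIntegrable (by fun_prop) _ _),
      integral_const_mul, integral_pow, integral_pow, hσ]
    ring
  simp only [hσ_sub]
  exact (exp_neg_mul_mul_sin_sq_div_sq_sub_isBigO_pow_four c₀ hω₀).intervalIntegral_pow_succ
    |>.trans_isLittleO (isLittleO_pow_pow (by norm_num))

theorem sigma_z_sq_expansion (c₀ k : ℝ) (hc : 0 < c₀) (h4k : c₀ ^ 2 < 4 * k)
    (ω : ℝ) (hω : ω = Real.sqrt (4 * k - c₀ ^ 2) / 2)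
    (σz2 : ℝ → ℝ)
    (hσ : ∀ t, σz2 t = 1 / ω ^ 2 * ∫ s in (0 : ℝ)..t, Real.exp (-c₀ * s) * Real.sin (ω * s) ^ 2) :
    (fun t => σz2 t - (t ^ 3 / 3 - c₀ * t ^ 4 / 4)) =o[nhds 0] fun t => t ^ 4 :=
  sigma_z_sq_expansion_general c₀ k h4k ω hω σz2 hσ
end

section
/- Let c₀ > 0, 4k > c₀², ω := √(4k - c₀²)/2, σ_y²(t) := ∫₀ᵗ e^{-c₀s}(cos(ωs) - (c₀/(2ω))sin(ωs))² ds, σ_z²(t) := (1/ω²)∫₀ᵗ e^{-c₀s} sin²(ωs) ds, and σ_{yz}(t) := (1/(2ω²)) e^{-c₀t} sin²(ωt). Then the correlation ρ(t) := σ_{yz}(t)/(σ_y(t)·σ_z(t)) satisfies ρ(t) → √3/2 as t → 0⁺, and more precisely ρ(t) = (√3/2)(1 - (c₀/8)t + o(t)). -/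
/-!
For `t > 0` write the two variances and the covariance as weighted means of their integrands:
`σ_y² = t · a(t)`, `σ_z² = (t³/3) · b(t)` and `σ_yz = (t²/2) · g(t)`, where
`g(s) = e^{-c₀ s} sinc(ω s)²`, `a` is the mean of the integrand of `σ_y²` over `[0, t]` and `b` is
the mean of `g` over `[0, t]` for the weight `3 s² / t³`. Then `ρ = (√3/2) · g / √(a b)`.
All three functions equal `1` at `0`, with right derivatives `-c₀`, `-3c₀/4` and `-c₀`, so
`g / √(a b)` has value `1` and derivative `-c₀ - (-c₀ - 3c₀/4)/2 = -c₀/8` at `0⁺`.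
-/

open Real Filter Asymptotics Set Topology

theorem Real.sin_eq_mul_sinc (x : ℝ) : sin x = x * sinc x := by
  rcases eq_or_ne x 0 with rfl | hx
  · simp
  · rw [sinc_of_ne_zero hx, mul_div_cancel₀ _ hx]

theorem Real.hasDerivAt_sinc_zero : HasDerivAt sinc 0 0 := by
  have hbound : ∀ x : ℝ, |x| ≤ 1 → |sinc x - 1| ≤ |x ^ 2| := by
    intro x hx
    rcases eq_or_ne x 0 with rfl | hx0
    · simp
    have hsin := sin_bound hx
    have hx5 : |x| ^ 5 ≤ |x| ^ 3 := pow_le_pow_of_le_one (abs_nonneg x) hx (by norm_num)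
    have key : |x| * |sinc x - 1| ≤ |x| * |x ^ 2| := by
      rw [← abs_mul, mul_sub, mul_one, ← sin_eq_mul_sinc, abs_pow, ← pow_succ']
      calc |sin x - x| ≤ |sin x - (x - x ^ 3 / 6)| + |x - x ^ 3 / 6 - x| := abs_sub_le _ _ _
        _ ≤ |x| ^ 3 := by
          rw [sub_sub_cancel_left, abs_neg, abs_div, abs_pow, abs_of_pos (by norm_num : (0:ℝ) < 6)]
          linarith [pow_nonneg (abs_nonneg x) 3]
    exact le_of_mul_le_mul_left key (abs_pos.2 hx0)
  have hO : (fun x => sinc x - 1) =O[𝓝 0] fun x : ℝ => x ^ 2 :=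
    isBigO_iff.2 ⟨1, by
      filter_upwards [Metric.closedBall_mem_nhds (0 : ℝ) one_pos] with x hx
      simpa [Real.norm_eq_abs] using hbound x (by simpa using hx)⟩
  rw [hasDerivAt_iff_isLittleO]
  simpa [sinc_zero] using hO.trans_isLittleO (isLittleO_pow_pow (by norm_num : 1 < 2))

theorem isLittleO_intervalIntegral_of_isLittleO_pow {E : Type*} [NormedAddCommGroup E]
    [NormedSpace ℝ E] {φ : ℝ → E} {n : ℕ} (h : φ =o[𝓝[>] 0] fun s => s ^ n) :
    (fun t => ∫ s in 0..t, φ s) =o[𝓝[>] 0] fun t => t ^ (n + 1) := by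
  refine isLittleO_iff.2 fun ε hε => ?_
  obtain ⟨u, hu, hφ⟩ := (nhdsGT_basis (0 : ℝ)).eventually_iff.1 (h.def hε)
  filter_upwards [Ioo_mem_nhdsGT hu] with t ⟨ht0, htu⟩
  have hle : ∀ s ∈ uIoc 0 t, ‖φ s‖ ≤ ε * t ^ n := by
    intro s hs
    rw [uIoc_of_le ht0.le] at hs
    calc ‖φ s‖ ≤ ε * ‖s ^ n‖ := hφ ⟨hs.1, hs.2.trans_lt htu⟩
      _ ≤ ε * t ^ n := by
        rw [norm_pow, Real.norm_of_nonneg hs.1.le]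
        gcongr
        exacts [hs.1.le, hs.2]
  calc ‖∫ s in 0..t, φ s‖ ≤ ε * t ^ n * |t - 0| :=
        intervalIntegral.norm_integral_le_of_norm_le_const hle
    _ = ε * ‖t ^ (n + 1)‖ := by
      rw [sub_zero, abs_of_pos ht0, norm_pow, Real.norm_of_nonneg ht0.le]; ring

/-- The mean of `f` over `[0, t]` for the probability density `(n + 1) s ^ n / t ^ (n + 1)`,
extended by `f 0` at `t = 0`. -/
noncomputable def powWeightedMean (n : ℕ) (f : ℝ → ℝ) : ℝ → ℝ :=
  Function.update (fun t => (n + 1) * (∫ s in 0..t, s ^ n * f s) / t ^ (n + 1)) 0 (f 0)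

@[simp]
theorem powWeightedMean_zero (n : ℕ) (f : ℝ → ℝ) : powWeightedMean n f 0 = f 0 :=
  Function.update_self ..

theorem integral_pow_mul_eq_powWeightedMean (n : ℕ) (f : ℝ → ℝ) {t : ℝ} (ht : t ≠ 0) :
    ∫ s in 0..t, s ^ n * f s = t ^ (n + 1) / (n + 1) * powWeightedMean n f t := by
  rw [powWeightedMean, Function.update_of_ne ht]
  field_simp

theorem integral_eq_mul_powWeightedMean_zero (f : ℝ → ℝ) {t : ℝ} (ht : t ≠ 0) :
    ∫ s in 0..t, f s = t * powWeightedMean 0 f t := by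
  simpa using integral_pow_mul_eq_powWeightedMean 0 f ht

theorem integral_pow_mul_add_mul (n : ℕ) (a b t : ℝ) :
    ∫ s in 0..t, s ^ n * (a + b * s) = a * t ^ (n + 1) / (n + 1) + b * t ^ (n + 2) / (n + 2) := by
  have h : ∀ s : ℝ, s ^ n * (a + b * s) = a * s ^ n + b * s ^ (n + 1) := fun s => by ring
  simp_rw [h]
  rw [intervalIntegral.integral_add (by apply Continuous.intervalIntegrable; fun_prop)
      (by apply Continuous.intervalIntegrable; fun_prop), intervalIntegral.integral_const_mul,
    intervalIntegral.integral_const_mul, integral_pow, integral_pow]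
  push_cast
  ring

theorem hasDerivWithinAt_powWeightedMean {n : ℕ} {f : ℝ → ℝ} {f' : ℝ} (hf : Continuous f)
    (hf' : HasDerivWithinAt f f' (Ioi 0) 0) :
    HasDerivWithinAt (powWeightedMean n f) ((n + 1) / (n + 2) * f') (Ioi 0) 0 := by
  have hlin : (fun s => s ^ n * f s - s ^ n * (f 0 + f' * s)) =o[𝓝[>] 0] fun s => s ^ (n + 1) :=
    ((isBigO_refl (fun s : ℝ => s ^ n) _).mul_isLittleO hf'.isLittleO).congr
      (fun s => by simp only [sub_zero, smul_eq_mul]; ring) (fun s => by ring)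
  have hint := (isLittleO_intervalIntegral_of_isLittleO_pow hlin).mul_isBigO
    (isBigO_refl (fun t : ℝ => (t ^ (n + 1))⁻¹) _) |>.const_mul_left ((n : ℝ) + 1)
  rw [hasDerivWithinAt_iff_isLittleO]
  refine hint.congr' ?_ ?_ <;> filter_upwards [self_mem_nhdsWithin] with t (ht : 0 < t)
  · rw [intervalIntegral.integral_sub (by apply Continuous.intervalIntegrable; fun_prop)
      (by apply Continuous.intervalIntegrable; fun_prop), integral_pow_mul_add_mul,
      integral_pow_mul_eq_powWeightedMean n f ht.ne', powWeightedMean_zero, smul_eq_mul, sub_zero, show n + 2 = n + 1 + 1 from rfl, pow_succ t (n + 1)]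
    field_simp
    ring
  · field_simp
    ring

theorem HasDerivWithinAt.div_sqrt_mul_of_eq_one {a b c : ℝ → ℝ} {a' b' c' : ℝ} {s : Set ℝ}
    {x : ℝ} (ha : HasDerivWithinAt a a' s x) (hb : HasDerivWithinAt b b' s x)
    (hc : HasDerivWithinAt c c' s x) (ha1 : a x = 1) (hb1 : b x = 1) (hc1 : c x = 1) :
    HasDerivWithinAt (fun t => c t / √(a t * b t)) (c' - (a' + b') / 2) s x :=
  (hc.fun_div ((ha.fun_mul hb).sqrt (by simp [ha1, hb1])) (by simp [ha1, hb1])).congr_deriv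
    (by simp [ha1, hb1, hc1])

theorem hasDerivAt_exp_mul_cos_sub_sin_sq_zero (c ω : ℝ) (hω : ω ≠ 0) :
    HasDerivAt (fun s => exp (-c * s) * (cos (ω * s) - c / (2 * ω) * sin (ω * s)) ^ 2)
      (-2 * c) 0 := by
  have hlin (μ : ℝ) := (hasDerivAt_id' (0 : ℝ)).const_mul μ
  refine ((hlin (-c)).exp.fun_mul
    (((hlin ω).cos.fun_sub ((hlin ω).sin.const_mul (c / (2 * ω)))).fun_pow 2)).congr_deriv ?_
  simp
  field_simp
  ring

theorem hasDerivAt_exp_mul_sinc_sq_zero (c ω : ℝ) :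
    HasDerivAt (fun s => exp (-c * s) * sinc (ω * s) ^ 2) (-c) 0 := by
  have hlin (μ : ℝ) := (hasDerivAt_id' (0 : ℝ)).const_mul μ
  have hsinc : HasDerivAt (fun s => sinc (ω * s)) 0 0 :=
    (hasDerivAt_sinc_zero.comp_of_eq 0 (hlin ω) (mul_zero ω).symm).congr_deriv (zero_mul _)
  exact ((hlin (-c)).exp.fun_mul (hsinc.fun_pow 2)).congr_deriv (by simp)

theorem exp_mul_sin_sq_eq (c ω s : ℝ) :
    exp (-c * s) * sin (ω * s) ^ 2 = ω ^ 2 * (s ^ 2 * (exp (-c * s) * sinc (ω * s) ^ 2)) := by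
  rw [sin_eq_mul_sinc]; ring

theorem one_div_sq_mul_integral_exp_mul_sin_sq {c ω t : ℝ} (hω : ω ≠ 0) (ht : t ≠ 0) :
    1 / ω ^ 2 * ∫ s in 0..t, exp (-c * s) * sin (ω * s) ^ 2 =
      t ^ 3 / 3 * powWeightedMean 2 (fun s => exp (-c * s) * sinc (ω * s) ^ 2) t := by
  simp_rw [exp_mul_sin_sq_eq c ω, intervalIntegral.integral_const_mul,
    integral_pow_mul_eq_powWeightedMean 2 _ ht]
  field_simp
  ring

theorem one_div_two_sq_mul_exp_mul_sin_sq {c ω : ℝ} (hω : ω ≠ 0) (t : ℝ) :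
    1 / (2 * ω ^ 2) * exp (-c * t) * sin (ω * t) ^ 2 =
      t ^ 2 / 2 * (exp (-c * t) * sinc (ω * t) ^ 2) := by
  rw [mul_assoc, exp_mul_sin_sq_eq]
  field_simp

theorem half_sq_mul_div_sqrt_mul_sqrt {t a b c : ℝ} (ht : 0 < t) (ha : 0 ≤ a) :
    t ^ 2 / 2 * c / (√(t * a) * √(t ^ 3 / 3 * b)) = √3 / 2 * (c / √(a * b)) := by
  rw [← sqrt_mul (by positivity), show t * a * (t ^ 3 / 3 * b) = (t ^ 2) ^ 2 * (a * b / 3) by ring,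
    sqrt_mul (by positivity), sqrt_sq (by positivity), sqrt_div' _ (by norm_num : (0:ℝ) ≤ 3),
    show t ^ 2 / 2 * c = t ^ 2 * (c / 2) by ring, mul_div_mul_left _ _ (by positivity),
    div_div_eq_mul_div]
  ring

theorem rho_expansion_general (c₀ k : ℝ) (h4k : c₀ ^ 2 < 4 * k)
    (ω : ℝ) (hω : ω = Real.sqrt (4 * k - c₀ ^ 2) / 2)
    (σy σz σyz ρ : ℝ → ℝ)
    (hσy : ∀ t, σy t = Real.sqrt (∫ s in (0 : ℝ)..t,
      Real.exp (-c₀ * s) * (Real.cos (ω * s) - c₀ / (2 * ω) * Real.sin (ω * s)) ^ 2))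
    (hσz : ∀ t, σz t = Real.sqrt (1 / ω ^ 2 * ∫ s in (0 : ℝ)..t,
      Real.exp (-c₀ * s) * Real.sin (ω * s) ^ 2))
    (hσyz : ∀ t, σyz t = 1 / (2 * ω ^ 2) * Real.exp (-c₀ * t) * Real.sin (ω * t) ^ 2)
    (hρ : ∀ t, ρ t = σyz t / (σy t * σz t)) :
    Tendsto ρ (nhdsWithin 0 (Set.Ioi 0)) (nhds (Real.sqrt 3 / 2)) ∧
    (fun t => ρ t - Real.sqrt 3 / 2 * (1 - c₀ / 8 * t))
      =o[nhdsWithin 0 (Set.Ioi 0)] fun t => t := by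
  have hω0 : ω ≠ 0 := by
    rw [hω]; exact div_ne_zero (sqrt_pos.2 (by linarith)).ne' two_ne_zero
  set gy : ℝ → ℝ := fun s => exp (-c₀ * s) * (cos (ω * s) - c₀ / (2 * ω) * sin (ω * s)) ^ 2
  set g : ℝ → ℝ := fun s => exp (-c₀ * s) * sinc (ω * s) ^ 2
  set a := powWeightedMean 0 gy
  set b := powWeightedMean 2 g
  have ha : HasDerivWithinAt a (-c₀) (Ioi 0) 0 :=
    (hasDerivWithinAt_powWeightedMean (by fun_prop)
      (hasDerivAt_exp_mul_cos_sub_sin_sq_zero c₀ ω hω0).hasDerivWithinAt).congr_deriv (by ring)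
  have hb : HasDerivWithinAt b (-(3 / 4) * c₀) (Ioi 0) 0 :=
    (hasDerivWithinAt_powWeightedMean (by fun_prop)
      (hasDerivAt_exp_mul_sinc_sq_zero c₀ ω).hasDerivWithinAt).congr_deriv (by norm_num)
  have hR : HasDerivWithinAt (fun t => √3 / 2 * (g t / √(a t * b t))) (√3 / 2 * (-c₀ / 8))
      (Ioi 0) 0 :=
    ((ha.div_sqrt_mul_of_eq_one hb (hasDerivAt_exp_mul_sinc_sq_zero c₀ ω).hasDerivWithinAt
      (by simp [a, gy]) (by simp [b, g]) (by simp)).const_mul (√3 / 2)).congr_deriv (by ring)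
  have hR0 : √3 / 2 * (g 0 / √(a 0 * b 0)) = √3 / 2 := by simp [a, b, g, gy]
  have hρR : ρ =ᶠ[𝓝[>] 0] fun t => √3 / 2 * (g t / √(a t * b t)) := by
    filter_upwards [self_mem_nhdsWithin,
      ha.continuousWithinAt.tendsto.eventually_const_lt
        (by simp [a, gy] : (0 : ℝ) < a 0)] with t (ht : 0 < t) hat
    rw [hρ, hσyz, hσy, hσz, integral_eq_mul_powWeightedMean_zero _ ht.ne',
      one_div_sq_mul_integral_exp_mul_sin_sq hω0 ht.ne', one_div_two_sq_mul_exp_mul_sin_sq hω0,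
      half_sq_mul_div_sqrt_mul_sqrt ht hat.le]
  constructor
  · exact hR0 ▸ hR.continuousWithinAt.tendsto.congr' hρR.symm
  · refine (hasDerivWithinAt_iff_isLittleO.1 hR).congr' ?_ (by simp)
    filter_upwards [hρR] with t ht
    rw [ht, hR0, smul_eq_mul, sub_zero]
    ring

theorem rho_expansion (c₀ k : ℝ) (hc : 0 < c₀) (h4k : c₀ ^ 2 < 4 * k)
    (ω : ℝ) (hω : ω = Real.sqrt (4 * k - c₀ ^ 2) / 2)
    (σy σz σyz ρ : ℝ → ℝ)
    (hσy : ∀ t, σy t = Real.sqrt (∫ s in (0 : ℝ)..t,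
      Real.exp (-c₀ * s) * (Real.cos (ω * s) - c₀ / (2 * ω) * Real.sin (ω * s)) ^ 2))
    (hσz : ∀ t, σz t = Real.sqrt (1 / ω ^ 2 * ∫ s in (0 : ℝ)..t,
      Real.exp (-c₀ * s) * Real.sin (ω * s) ^ 2))
    (hσyz : ∀ t, σyz t = 1 / (2 * ω ^ 2) * Real.exp (-c₀ * t) * Real.sin (ω * t) ^ 2)
    (hρ : ∀ t, ρ t = σyz t / (σy t * σz t)) :
    Tendsto ρ (nhdsWithin 0 (Set.Ioi 0)) (nhds (Real.sqrt 3 / 2)) ∧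
    (fun t => ρ t - Real.sqrt 3 / 2 * (1 - c₀ / 8 * t))
      =o[nhdsWithin 0 (Set.Ioi 0)] fun t => t :=
  rho_expansion_general c₀ k h4k ω hω σy σz σyz ρ hσy hσz hσyz hρ
end
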